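/- arXiv:1310.1805 — 3 statements merged into one kernel-verified Lean document; each statement's English description precedes it below -/
import Mathlib

section
/- For two permutations σ, μ ∈ S_n, σ ≤ μ in the Bruhat order if and only if for all k, r with 1 ≤ k, r < n, the cardinality #{i ≤ k : σ(i) ≤ r} is greater than or equal to #{i ≤ k : μ(i) ≤ r} (Ehresmann's key/tableau criterion). -/
/-- Number of inversions (Coxeter length) of a permutation of `Fin n`. -/
def invCount (n : ℕ) (σ : Equiv.Perm (Fin n)) : ℕ :=
  (Finset.univ.filter fun p : Fin n × Fin n => p.1 < p.2 ∧ σ p.2 < σ p.1).card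

/-- The Bruhat order: generated by `σ < στ` for `τ` a transposition with
`ℓ(στ) = ℓ(σ) + 1`. -/
def bruhatLE (n : ℕ) (σ μ : Equiv.Perm (Fin n)) : Prop :=
  Relation.ReflTransGen
    (fun a b => ∃ x y : Fin n, x ≠ y ∧ b = a * Equiv.swap x y ∧
      invCount n b = invCount n a + 1) σ μ

/-!
Write `r_π(k, r) = #{i < k | π i < r}`. For `x < y` with `π x < π y`, passing from `π` to
`π (x y)` lowers `r_π` by one on the rectangle `x < k ≤ y`, `π x < r ≤ π y` and leaves it unchanged
elsewhere, while it adds `1 + 2m` inversions, `m` being the number of `x < l < y` with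
`π x < π l < π y`. Hence a Bruhat cover `π ⋖ π (x y)`, `x < y`, has `π x < π y` and can only lower
the rank function, which gives one direction.

Conversely, let `r_μ ≤ r_σ` with `σ ≠ μ`, and let `i` be the first position where they differ.
Then `σ i < μ i`, and for the first `j > i` with `σ i < σ j ≤ μ i`, the swap `σ (i j)` is a cover
(`m = 0` by the choice of `j`) and still satisfies `r_μ ≤ r_{σ (i j)}`, because comparing counts of
values in `[r, μ i]` shows `r_μ < r_σ` on the rectangle. The length goes up at each step, so
iterating reaches `μ`.
-/

open Finset Equiv

theorem Fintype.sum_eq_add_add_sum_compl {α M : Type*} [Fintype α] [DecidableEq α]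
    [AddCommMonoid M] {x y : α} (hxy : x ≠ y) (f : α → M) :
    ∑ i, f i = f x + f y + ∑ i ∈ {x, y}ᶜ, f i := by
  rw [← sum_add_sum_compl {x, y}, sum_pair hxy]

theorem Fintype.sum_sum_eq_add_add_sum_sum_compl {α M : Type*} [Fintype α] [DecidableEq α]
    [AddCommMonoid M] {x y : α} (hxy : x ≠ y) (G : α → α → M) :
    ∑ a, ∑ b, G a b = (G x x + G x y + G y x + G y y)
      + ∑ l ∈ {x, y}ᶜ, (G x l + G y l + G l x + G l y)
      + ∑ a ∈ {x, y}ᶜ, ∑ b ∈ {x, y}ᶜ, G a b := by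
  simp only [Fintype.sum_eq_add_add_sum_compl hxy, sum_add_distrib]
  abel

section

variable {n : ℕ}

theorem invCount_eq_sum (σ : Perm (Fin n)) :
    invCount n σ = ∑ a, ∑ b, if a < b ∧ σ b < σ a then 1 else 0 := by
  rw [invCount, card_filter, Fintype.sum_prod_type]

theorem invCount_mul_swap_eq_sum (σ : Perm (Fin n)) (x y : Fin n) :
    invCount n (σ * swap x y) =
      ∑ a, ∑ b, if swap x y a < swap x y b ∧ σ b < σ a then 1 else 0 := by
  rw [invCount_eq_sum, ← Equiv.sum_comp (swap x y)]
  refine sum_congr rfl fun a _ => ?_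
  rw [← Equiv.sum_comp (swap x y)]
  simp [swap_apply_self]

theorem invCount_mul_swap_of_lt (σ : Perm (Fin n)) {x y : Fin n} (hxy : x < y) (hσ : σ x < σ y) :
    invCount n (σ * swap x y) =
      invCount n σ + 1 + 2 * #{l | x < l ∧ l < y ∧ σ x < σ l ∧ σ l < σ y} := by
  rw [invCount_mul_swap_eq_sum, invCount_eq_sum, Fintype.sum_sum_eq_add_add_sum_sum_compl hxy.ne,
    Fintype.sum_sum_eq_add_add_sum_sum_compl hxy.ne]
  have hcompl {l : Fin n} (hl : l ∈ ({x, y} : Finset (Fin n))ᶜ) : l ≠ x ∧ l ≠ y := by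
    simpa [not_or] using hl
  have edge : ∀ l ∈ ({x, y} : Finset (Fin n))ᶜ,
      ((if swap x y x < swap x y l ∧ σ l < σ x then 1 else 0) +
        (if swap x y y < swap x y l ∧ σ l < σ y then 1 else 0) +
        (if swap x y l < swap x y x ∧ σ x < σ l then 1 else 0) +
        (if swap x y l < swap x y y ∧ σ y < σ l then 1 else 0)) =
      ((if x < l ∧ σ l < σ x then 1 else 0) + (if y < l ∧ σ l < σ y then 1 else 0) +
        (if l < x ∧ σ x < σ l then 1 else 0) + (if l < y ∧ σ y < σ l then 1 else 0)) +
        if x < l ∧ l < y ∧ σ x < σ l ∧ σ l < σ y then 2 else 0 := by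
    intro l hl
    obtain ⟨hx, hy⟩ := hcompl hl
    have h1 : σ l ≠ σ x := σ.injective.ne hx
    have h2 : σ l ≠ σ y := σ.injective.ne hy
    simp only [swap_apply_left, swap_apply_right, swap_apply_of_ne_of_ne hx hy]
    simp only [Fin.lt_def, ne_eq, Fin.ext_iff] at *
    split_ifs <;> omega
  have center : ∑ a ∈ ({x, y} : Finset (Fin n))ᶜ, ∑ b ∈ ({x, y} : Finset (Fin n))ᶜ,
      (if swap x y a < swap x y b ∧ σ b < σ a then 1 else 0) =
      ∑ a ∈ ({x, y} : Finset (Fin n))ᶜ, ∑ b ∈ ({x, y} : Finset (Fin n))ᶜ,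
      (if a < b ∧ σ b < σ a then 1 else 0) := by
    refine sum_congr rfl fun a ha => sum_congr rfl fun b hb => ?_
    rw [swap_apply_of_ne_of_ne (hcompl ha).1 (hcompl ha).2,
      swap_apply_of_ne_of_ne (hcompl hb).1 (hcompl hb).2]
  have middle : ∑ l ∈ ({x, y} : Finset (Fin n))ᶜ,
      (if x < l ∧ l < y ∧ σ x < σ l ∧ σ l < σ y then 2 else 0) =
      2 * #{l | x < l ∧ l < y ∧ σ x < σ l ∧ σ l < σ y} := by
    rw [← sum_filter, sum_const, smul_eq_mul, mul_comm]
    congr 2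
    ext l
    simp only [mem_filter, mem_compl, mem_insert, mem_singleton, mem_univ, true_and]
    exact ⟨fun h => h.2, fun h => ⟨by rintro (rfl | rfl) <;> simp_all, h⟩⟩
  rw [sum_congr rfl edge, sum_add_distrib, center, middle]
  simp only [swap_apply_left, swap_apply_right, lt_irrefl, hxy, hσ, hxy.not_gt, hσ.not_gt,
    false_and, and_false, and_self, if_true, if_false]
  ring

theorem invCount_le (σ : Perm (Fin n)) : invCount n σ ≤ n * n := by
  unfold invCount
  simpa using card_filter_le (univ : Finset (Fin n × Fin n)) _

theorem lt_of_invCount_mul_swap_eq_succ (σ : Perm (Fin n)) {x y : Fin n} (hxy : x < y)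
    (h : invCount n (σ * swap x y) = invCount n σ + 1) : σ x < σ y := by
  refine (lt_or_gt_of_ne (σ.injective.ne hxy.ne)).resolve_right fun hyx => ?_
  have hτ : (σ * swap x y) x < (σ * swap x y) y := by simpa using hyx
  have := invCount_mul_swap_of_lt (σ * swap x y) hxy hτ
  rw [mul_assoc, swap_mul_self, mul_one] at this
  omega

/-- `bruhatLE n` is, by definition, `Relation.ReflTransGen (BruhatCover n)`. -/
def BruhatCover (n : ℕ) (a b : Perm (Fin n)) : Prop :=
  ∃ x y : Fin n, x ≠ y ∧ b = a * swap x y ∧ invCount n b = invCount n a + 1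

theorem bruhatCover_mul_swap (σ : Perm (Fin n)) {x y : Fin n} (hxy : x < y) (hσ : σ x < σ y)
    (hmid : ∀ l, x < l → l < y → ¬ (σ x < σ l ∧ σ l < σ y)) :
    BruhatCover n σ (σ * swap x y) := by
  refine ⟨x, y, hxy.ne, rfl, ?_⟩
  rw [invCount_mul_swap_of_lt σ hxy hσ,
    card_eq_zero.mpr (filter_eq_empty_iff.mpr fun l _ h => hmid l h.1 h.2.1 h.2.2)]

def rankCount (π : Perm (Fin n)) (k r : ℕ) : ℕ :=
  #{i : Fin n | (i : ℕ) < k ∧ (π i : ℕ) < r}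

theorem rankCount_of_le_left (π : Perm (Fin n)) {k : ℕ} (hk : n ≤ k) (r : ℕ) :
    rankCount π k r = #{v : Fin n | (v : ℕ) < r} := by
  have hlt (i : Fin n) : (i : ℕ) < k := i.isLt.trans_le hk
  simp only [rankCount, hlt, true_and, card_filter]
  exact Equiv.sum_comp π fun v => if (v : ℕ) < r then 1 else 0

theorem rankCount_of_le_right (π : Perm (Fin n)) (k : ℕ) {r : ℕ} (hr : n ≤ r) :
    rankCount π k r = #{i : Fin n | (i : ℕ) < k} := by
  have hlt (i : Fin n) : (π i : ℕ) < r := (π i).isLt.trans_le hr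
  simp only [rankCount, hlt, and_true]

theorem forall_rankCount_le_of_forall_lt {σ μ : Perm (Fin n)}
    (h : ∀ k r, 1 ≤ k → k < n → 1 ≤ r → r < n → rankCount μ k r ≤ rankCount σ k r) (k r : ℕ) :
    rankCount μ k r ≤ rankCount σ k r := by
  rcases Nat.eq_zero_or_pos k with rfl | hk
  · simp [rankCount]
  rcases Nat.eq_zero_or_pos r with rfl | hr
  · simp [rankCount]
  rcases lt_or_ge k n with hkn | hkn
  · rcases lt_or_ge r n with hrn | hrn
    · exact h k r hk hkn hr hrn
    · rw [rankCount_of_le_right σ k hrn, rankCount_of_le_right μ k hrn]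
  · rw [rankCount_of_le_left σ hkn, rankCount_of_le_left μ hkn]

theorem rankCount_mul_swap_add (π : Perm (Fin n)) {x y : Fin n} (hxy : x ≠ y) (k r : ℕ) :
    rankCount (π * swap x y) k r +
        ((if (x : ℕ) < k ∧ (π x : ℕ) < r then 1 else 0) +
          (if (y : ℕ) < k ∧ (π y : ℕ) < r then 1 else 0)) =
      rankCount π k r +
        ((if (x : ℕ) < k ∧ (π y : ℕ) < r then 1 else 0) +
          (if (y : ℕ) < k ∧ (π x : ℕ) < r then 1 else 0)) := by
  have hcompl : ∀ l ∈ ({x, y} : Finset (Fin n))ᶜ, (π * swap x y) l = π l := by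
    intro l hl
    simp only [mem_compl, mem_insert, mem_singleton, not_or] at hl
    rw [Perm.mul_apply, swap_apply_of_ne_of_ne hl.1 hl.2]
  rw [rankCount, rankCount, card_filter, card_filter, Fintype.sum_eq_add_add_sum_compl hxy,
    Fintype.sum_eq_add_add_sum_compl hxy, sum_congr rfl fun l hl => by rw [hcompl l hl]]
  simp only [Perm.mul_apply, swap_apply_left, swap_apply_right]
  ring

theorem rankCount_mul_swap_le (π : Perm (Fin n)) {x y : Fin n} (hxy : x < y) (hπ : π x < π y)
    (k r : ℕ) : rankCount (π * swap x y) k r ≤ rankCount π k r := by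
  have h := rankCount_mul_swap_add π hxy.ne k r
  rw [Fin.lt_def] at hxy hπ
  split_ifs at h <;> omega

theorem BruhatCover.rankCount_le {a b : Perm (Fin n)} (h : BruhatCover n a b) (k r : ℕ) :
    rankCount b k r ≤ rankCount a k r := by
  obtain ⟨x, y, hxy, rfl, hinv⟩ := h
  wlog hlt : x < y generalizing x y
  · rw [swap_comm] at hinv ⊢
    exact this y x hxy.symm hinv ((lt_or_gt_of_ne hxy).resolve_left hlt)
  exact rankCount_mul_swap_le a hlt (lt_of_invCount_mul_swap_eq_succ a hlt hinv) k r

theorem rankCount_le_of_bruhatLE {σ μ : Perm (Fin n)} (h : bruhatLE n σ μ) (k r : ℕ) :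
    rankCount μ k r ≤ rankCount σ k r := by
  induction h with
  | refl => exact le_rfl
  | tail _ hcov ih => exact (BruhatCover.rankCount_le hcov k r).trans ih

theorem card_filter_lt_of_eq_below {α : Type*} (σ μ : Fin n → α) (P : α → Prop)
    [DecidablePred P] {i : Fin n} {k : ℕ} (hagree : ∀ l < i, σ l = μ l) (hik : (i : ℕ) < k)
    (hσ : ¬ P (σ i)) (hμ : P (μ i)) (hgap : ∀ l, i < l → (l : ℕ) < k → ¬ P (σ l)) :
    #{l : Fin n | (l : ℕ) < k ∧ P (σ l)} < #{l : Fin n | (l : ℕ) < k ∧ P (μ l)} := by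
  have hsub : insert i (univ.filter fun l : Fin n => (l : ℕ) < k ∧ P (σ l)) ⊆
      univ.filter fun l => (l : ℕ) < k ∧ P (μ l) := by
    intro l hl
    simp only [mem_insert, mem_filter, mem_univ, true_and] at hl ⊢
    rcases hl with rfl | ⟨hlk, hl⟩
    · exact ⟨hik, hμ⟩
    rcases lt_trichotomy l i with hli | rfl | hil
    · exact ⟨hlk, hagree l hli ▸ hl⟩
    · exact absurd hl hσ
    · exact absurd hl (hgap l hil hlk)
  refine (card_lt_card (ssubset_insert ?_)).trans_le (card_le_card hsub)
  simp [hσ]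

theorem rankCount_add_card (π : Perm (Fin n)) (k : ℕ) {r r' : ℕ} (hr : r ≤ r') :
    rankCount π k r' =
      rankCount π k r + #{l : Fin n | (l : ℕ) < k ∧ r ≤ (π l : ℕ) ∧ (π l : ℕ) < r'} := by
  simp only [rankCount, card_filter, ← sum_add_distrib]
  refine sum_congr rfl fun l _ => ?_
  split_ifs <;> omega

theorem apply_lt_of_rankCount_le {σ μ : Perm (Fin n)} (h : ∀ k r, rankCount μ k r ≤ rankCount σ k r)
    {i : Fin n} (hagree : ∀ l < i, σ l = μ l) (hi : σ i ≠ μ i) : σ i < μ i := by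
  refine (lt_or_gt_of_ne hi).resolve_right fun hgt => (h (i + 1) (μ i + 1)).not_gt ?_
  rw [Fin.lt_def] at hgt
  exact card_filter_lt_of_eq_below σ μ (fun v : Fin n => (v : ℕ) < μ i + 1) hagree
    (Nat.lt_succ_self i) (by omega) (Nat.lt_succ_self _)
    fun l hil hl => absurd (Fin.lt_def.mp hil) (by omega)

theorem rankCount_lt_on_rectangle {σ μ : Perm (Fin n)}
    (h : ∀ k r, rankCount μ k r ≤ rankCount σ k r) {i j : Fin n} (hagree : ∀ l < i, σ l = μ l)
    (hj : σ j ≤ μ i) (hgap : ∀ l, i < l → l < j → ¬ (σ i < σ l ∧ σ l ≤ μ i)) {k r : ℕ}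
    (hik : (i : ℕ) < k) (hkj : k ≤ j) (hir : (σ i : ℕ) < r) (hrj : r ≤ σ j) :
    rankCount μ k r < rankCount σ k r := by
  rw [Fin.le_def] at hj
  have hcount := card_filter_lt_of_eq_below σ μ
    (fun v : Fin n => r ≤ (v : ℕ) ∧ (v : ℕ) < μ i + 1) hagree hik (by omega) (by omega)
    fun l hil hlk hl => hgap l hil (Fin.lt_def.mpr (by omega))
      ⟨Fin.lt_def.mpr (by omega), Fin.le_def.mpr (by omega)⟩
  have hdom := h k (μ i + 1)
  rw [rankCount_add_card σ k (show r ≤ μ i + 1 by omega),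
    rankCount_add_card μ k (show r ≤ μ i + 1 by omega)] at hdom
  omega

theorem exists_bruhatCover_of_rankCount_le {σ μ : Perm (Fin n)} (hne : σ ≠ μ)
    (h : ∀ k r, rankCount μ k r ≤ rankCount σ k r) :
    ∃ τ, BruhatCover n σ τ ∧ ∀ k r, rankCount μ k r ≤ rankCount τ k r := by
  obtain ⟨i, hi, hmin⟩ := wellFounded_lt.has_min {l | σ l ≠ μ l}
    (not_forall.mp fun h' => hne (Equiv.ext h'))
  have hagree : ∀ l < i, σ l = μ l := fun l hl => not_not.mp fun h' => hmin l h' hl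
  have hlt : σ i < μ i := apply_lt_of_rankCount_le h hagree hi
  have hpre : i < σ.symm (μ i) := by
    refine lt_of_not_ge fun hle => hle.lt_or_eq.elim (fun hlt' => ?_) fun heq => ?_
    · exact hlt'.ne (μ.injective ((hagree _ hlt').symm.trans (σ.apply_symm_apply _)))
    · exact hi (by simpa [heq] using σ.apply_symm_apply (μ i))
  obtain ⟨j, ⟨hij, hσij, hj⟩, hjmin⟩ := wellFounded_lt.has_min
    {l | i < l ∧ σ i < σ l ∧ σ l ≤ μ i} ⟨σ.symm (μ i), hpre, by simpa using hlt, by simp⟩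
  have hgap : ∀ l, i < l → l < j → ¬ (σ i < σ l ∧ σ l ≤ μ i) :=
    fun l hil hlj hl => hjmin l ⟨hil, hl⟩ hlj
  refine ⟨σ * swap i j, bruhatCover_mul_swap σ hij hσij
    fun l hil hlj hl => hgap l hil hlj ⟨hl.1, hl.2.le.trans hj⟩, fun k r => ?_⟩
  have hswap := rankCount_mul_swap_add σ hij.ne k r
  have hdom := h k r
  rw [Fin.lt_def] at hij hσij
  by_cases hrect : (i : ℕ) < k ∧ k ≤ j ∧ (σ i : ℕ) < r ∧ r ≤ σ j
  · have := rankCount_lt_on_rectangle h hagree hj hgap hrect.1 hrect.2.1 hrect.2.2.1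
      hrect.2.2.2
    split_ifs at hswap <;> omega
  · split_ifs at hswap <;> omega

theorem bruhatLE_of_rankCount_le {σ μ : Perm (Fin n)}
    (h : ∀ k r, rankCount μ k r ≤ rankCount σ k r) : bruhatLE n σ μ := by
  by_cases hσμ : σ = μ
  · exact hσμ ▸ .refl
  obtain ⟨τ, hcov, hτ⟩ := exists_bruhatCover_of_rankCount_le hσμ h
  have hinv : invCount n τ = invCount n σ + 1 := by
    obtain ⟨-, -, -, -, h⟩ := hcov
    exact h
  exact .head hcov (bruhatLE_of_rankCount_le hτ)
termination_by n * n - invCount n σ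
decreasing_by have := invCount_le τ; omega

end

/-- Positions and values are 0-based: the paper's `i ≤ k` and `σ(i) ≤ r` read `↑i < k` and
`↑(σ i) < r`. -/
theorem bruhat_iff_key_comparison (n : ℕ) (σ μ : Equiv.Perm (Fin n)) :
    bruhatLE n σ μ ↔
      ∀ k r : ℕ, 1 ≤ k → k < n → 1 ≤ r → r < n →
        (Finset.univ.filter fun i : Fin n => (i : ℕ) < k ∧ ((μ i : ℕ) < r)).card ≤
        (Finset.univ.filter fun i : Fin n => (i : ℕ) < k ∧ ((σ i : ℕ) < r)).card :=
  ⟨fun h k r _ _ _ _ => rankCount_le_of_bruhatLE h k r,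
    fun h => bruhatLE_of_rankCount_le (forall_rankCount_le_of_forall_lt h)⟩
end

section
/- For σ ∈ S_n and 1 ≤ k < n, if σ ≤_k μ in the k-Bruhat order then: (i) σ(a) ≤ μ(a) for every a ≤ k and σ(b) ≥ μ(b) for every b > k; conversely (Bergeron–Sottile), σ ≤_k μ if and only if condition (i) holds together with (ii): whenever a < b, σ(a) < σ(b) and μ(a) > μ(b), one has a ≤ k < b. -/
/-- The `k`-Bruhat order: transitive closure of the covers `σ ⋖ σ(a,b)` where `(a,b)`
is a `k`-transposition (position `a` among the first `k`, position `b` beyond `k`,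
1-based `a ≤ k < b`) with `ℓ(σ(a,b)) = ℓ(σ) + 1`. -/
def kBruhatLE (n k : ℕ) (σ μ : Equiv.Perm (Fin n)) : Prop :=
  Relation.ReflTransGen
    (fun a b => ∃ x y : Fin n, (x : ℕ) < k ∧ k ≤ (y : ℕ) ∧
      b = a * Equiv.swap x y ∧ invCount n b = invCount n a + 1) σ μ

/-!
For any permutation `τ`, the map `p ↦ sort (τ p)` on increasing pairs of positions is a
bijection from the inversions of `σ τ` onto the symmetric difference of the inversions of `σ`
and of `τ⁻¹`. For `τ = (x y)` with `x < y` the inversions of `τ` are `(x, y)` and the pairs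
`(x, m)`, `(m, y)` with `x < m < y`, which the bijection exchanges; counting them shows that
`σ (x y)` covers `σ` exactly when `σ x < σ y` and no `σ m` with `x < m < y` lies between them.

Along a cover with `x < k ≤ y` the conditions (i) and (ii) propagate. Conversely, if they hold
and `σ ≠ μ`, take the position `a < k` with `σ a < μ a` and `σ a` maximal, then the position
`b ≥ k` with `σ a < σ b ≤ μ a`, `μ b < σ b` and `σ b` minimal: `σ (a b)` covers `σ`, still
satisfies (i) and (ii) with respect to `μ`, and is closer to `μ` on the first `k` positions.
-/

open Equiv Finset
open scoped symmDiff

def sortPair {α : Type*} [LinearOrder α] (p : α × α) : α × α := (min p.1 p.2, max p.1 p.2)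

section SortPair
variable {α : Type*} [LinearOrder α]

theorem sortPair_of_le {p : α × α} (h : p.1 ≤ p.2) : sortPair p = p := by
  simp [sortPair, h]

theorem sortPair_fst_lt_snd {p : α × α} (h : p.1 ≠ p.2) : (sortPair p).1 < (sortPair p).2 := by
  simpa [sortPair, eq_comm] using h

theorem sortPair_map_sortPair (f : α → α) (p : α × α) :
    sortPair (Prod.map f f (sortPair p)) = sortPair (Prod.map f f p) := by
  rcases le_total p.1 p.2 with h | h
  · rw [sortPair_of_le h]
  · simp [sortPair, h, min_comm, max_comm]

theorem sortPair_map_sortPair_map_of_involutive {f : α → α} (hf : Function.Involutive f)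
    {p : α × α} (hp : p.1 ≤ p.2) : sortPair (Prod.map f f (sortPair (Prod.map f f p))) = p := by
  rw [sortPair_map_sortPair, Prod.map_map, hf.comp_self, Prod.map_id, id, sortPair_of_le hp]

theorem injOn_sortPair_map_of_involutive {f : α → α} (hf : Function.Involutive f) :
    Set.InjOn (fun p => sortPair (Prod.map f f p)) {p | p.1 ≤ p.2} := by
  intro p hp q hq hpq
  rw [← sortPair_map_sortPair_map_of_involutive hf hp,
    ← sortPair_map_sortPair_map_of_involutive hf hq]
  exact congrArg (fun q => sortPair (Prod.map f f q)) hpq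

end SortPair

variable {n : ℕ}

def invSet (σ : Perm (Fin n)) : Finset (Fin n × Fin n) := {p | p.1 < p.2 ∧ σ p.2 < σ p.1}

theorem invCount_eq_card_invSet (σ : Perm (Fin n)) : invCount n σ = #(invSet σ) := rfl

theorem mem_invSet {σ : Perm (Fin n)} {p : Fin n × Fin n} :
    p ∈ invSet σ ↔ p.1 < p.2 ∧ σ p.2 < σ p.1 := by
  simp [invSet]

theorem mem_invSet_mul_iff {σ τ : Perm (Fin n)} {p : Fin n × Fin n} (hp : p.1 < p.2) :
    p ∈ invSet (σ * τ) ↔ sortPair (Prod.map τ τ p) ∈ invSet σ ∆ invSet τ⁻¹ := by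
  obtain ⟨i, j⟩ := p
  simp only at hp
  have hij : τ i ≠ τ j := τ.injective.ne hp.ne
  rcases hij.lt_or_gt with h | h
  · simp [sortPair, mem_symmDiff, mem_invSet, h.le, h, hp, hp.not_gt]
  · simp [sortPair, mem_symmDiff, mem_invSet, h.le, h, hp, (σ.injective.ne hij.symm).le_iff_lt]

theorem card_invSet_mul (σ τ : Perm (Fin n)) :
    #(invSet (σ * τ)) = #(invSet σ ∆ invSet τ⁻¹) := by
  have hlt : ∀ {σ : Perm (Fin n)} {p}, p ∈ invSet σ → p.1 < p.2 := fun hp => (mem_invSet.1 hp).1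
  have hlt' : ∀ {p}, p ∈ invSet σ ∆ invSet τ⁻¹ → p.1 < p.2 := fun hp => by
    rcases mem_symmDiff.1 hp with h | h <;> exact hlt h.1
  refine card_nbij' (fun p => sortPair (Prod.map τ τ p))
    (fun q => sortPair (Prod.map ⇑(τ⁻¹) ⇑(τ⁻¹) q))
    (fun p hp => (mem_invSet_mul_iff (hlt hp)).1 hp) (fun q hq => ?_) (fun p hp => ?_)
    (fun q hq => ?_)
  · have : (sortPair (Prod.map ⇑(τ⁻¹) ⇑(τ⁻¹) q)).1 < (sortPair (Prod.map ⇑(τ⁻¹) ⇑(τ⁻¹) q)).2 :=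
      sortPair_fst_lt_snd (τ⁻¹.injective.ne (hlt' hq).ne)
    rw [Finset.mem_coe, mem_invSet_mul_iff this, sortPair_map_sortPair, Prod.map_map]
    simpa [sortPair_of_le (hlt' hq).le] using Finset.mem_coe.1 hq
  · simp [sortPair_map_sortPair, Prod.map_map, sortPair_of_le (hlt hp).le]
  · simp [sortPair_map_sortPair, Prod.map_map, sortPair_of_le (hlt' hq).le]

theorem invCount_mul_add_card_inter (σ τ : Perm (Fin n)) :
    invCount n (σ * τ) + #(invSet σ ∩ invSet τ⁻¹) =
      invCount n σ + #(invSet τ⁻¹ \ invSet σ) := by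
  rw [invCount_eq_card_invSet, invCount_eq_card_invSet, card_invSet_mul, Finset.symmDiff_def,
    card_union_of_disjoint disjoint_sdiff_sdiff,
    ← card_sdiff_add_card_inter (invSet σ) (invSet τ⁻¹)]
  ring

section Swap
variable {σ : Perm (Fin n)} {x y m : Fin n}

theorem mem_invSet_swap (hxy : x < y) {p : Fin n × Fin n} :
    p ∈ invSet (swap x y) ↔ p = (x, y) ∨ ∃ m, x < m ∧ m < y ∧ (p = (x, m) ∨ p = (m, y)) := by
  obtain ⟨i, j⟩ := p
  simp only [mem_invSet, swap_apply_def, Prod.mk.injEq]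
  split_ifs <;> grind

theorem sortPair_map_swap_left (hm : x < m) (hm' : m < y) :
    sortPair (Prod.map (swap x y) (swap x y) (x, m)) = (m, y) := by
  simp [sortPair, swap_apply_of_ne_of_ne hm.ne' hm'.ne, hm'.le]

theorem sortPair_map_swap_right (hm : x < m) (hm' : m < y) :
    sortPair (Prod.map (swap x y) (swap x y) (m, y)) = (x, m) := by
  simp [sortPair, swap_apply_of_ne_of_ne hm.ne' hm'.ne, hm.le]

theorem injOn_invSet_swap :
    Set.InjOn (fun p => sortPair (Prod.map (swap x y) (swap x y) p)) ↑(invSet (swap x y)) :=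
  (injOn_sortPair_map_of_involutive (swap_apply_self x y)).mono
    fun _ hp => (mem_invSet.1 hp).1.le

theorem invCount_mul_swap_add_card_inter (σ : Perm (Fin n)) (x y : Fin n) :
    invCount n (σ * swap x y) + #(invSet σ ∩ invSet (swap x y)) =
      invCount n σ + #(invSet (swap x y) \ invSet σ) := by
  simpa using invCount_mul_add_card_inter σ (swap x y)

theorem mapsTo_sortPair_swap_inter (hxy : x < y) (h : σ x < σ y) :
    Set.MapsTo (fun p => sortPair (Prod.map (swap x y) (swap x y) p))
      ↑(invSet σ ∩ invSet (swap x y))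
      {q | q ∈ invSet (swap x y) \ invSet σ ∧ q ≠ (x, y) ∧
        ∀ m, σ x < σ m → σ m < σ y → q ≠ (x, m)} := by
  intro p hp
  simp only [coe_inter, Set.mem_inter_iff, mem_coe, mem_invSet_swap hxy] at hp
  obtain ⟨hσ, rfl | ⟨m, hm, hm', rfl | rfl⟩⟩ := hp
  · exact absurd h (mem_invSet.1 hσ).2.not_gt
  · rw [mem_invSet] at hσ
    simp only [sortPair_map_swap_left hm hm', Set.mem_ofPred_eq, mem_sdiff, mem_invSet_swap hxy,
      mem_invSet]
    refine ⟨⟨?_, ?_⟩, ?_, ?_⟩ <;> grind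
  · rw [mem_invSet] at hσ
    simp only [sortPair_map_swap_right hm hm', Set.mem_ofPred_eq, mem_sdiff, mem_invSet_swap hxy,
      mem_invSet]
    refine ⟨⟨?_, ?_⟩, ?_, ?_⟩ <;> grind

theorem mapsTo_sortPair_swap_sdiff (hxy : x < y)
    (hmid : ∀ m, x < m → m < y → σ x < σ m → σ y < σ m) :
    Set.MapsTo (fun p => sortPair (Prod.map (swap x y) (swap x y) p))
      ↑((invSet (swap x y) \ invSet σ).erase (x, y)) ↑(invSet σ ∩ invSet (swap x y)) := by
  intro p hp
  simp only [coe_erase, Set.mem_sdiff, mem_coe, mem_sdiff, mem_invSet_swap hxy,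
    Set.mem_singleton_iff] at hp
  obtain ⟨⟨rfl | ⟨m, hm, hm', rfl | rfl⟩, hσ⟩, hne⟩ := hp
  · exact absurd rfl hne
  · rw [mem_invSet] at hσ
    simp only [sortPair_map_swap_left hm hm', mem_coe, mem_inter, mem_invSet_swap hxy, mem_invSet]
    have := σ.injective.ne hm.ne'
    grind
  · rw [mem_invSet] at hσ
    simp only [sortPair_map_swap_right hm hm', mem_coe, mem_inter, mem_invSet_swap hxy, mem_invSet]
    have := σ.injective.ne hm'.ne
    have := σ.injective.ne hm.ne'
    grind

theorem invCount_lt_invCount_mul_swap (hxy : x < y) (h : σ x < σ y) :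
    invCount n σ < invCount n (σ * swap x y) := by
  have hmem : (x, y) ∈ invSet (swap x y) \ invSet σ := by
    simp [mem_invSet_swap hxy, mem_invSet, h.not_gt]
  have hcard : #(invSet σ ∩ invSet (swap x y)) ≤ #((invSet (swap x y) \ invSet σ).erase (x, y)) :=
    card_le_card_of_injOn _
      (fun p hp => have hq := mapsTo_sortPair_swap_inter hxy h hp
        mem_erase.2 ⟨hq.2.1, hq.1⟩)
      (injOn_invSet_swap.mono fun p hp => (mem_inter.1 hp).2)
  have := invCount_mul_swap_add_card_inter σ x y
  rw [card_erase_of_mem hmem] at hcard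
  have := card_pos.2 ⟨_, hmem⟩
  omega

theorem invCount_add_two_le_invCount_mul_swap (hxy : x < y) (h : σ x < σ y) (hm : x < m)
    (hm' : m < y) (hσm : σ x < σ m) (hσm' : σ m < σ y) :
    invCount n σ + 2 ≤ invCount n (σ * swap x y) := by
  have hmem : (x, y) ∈ invSet (swap x y) \ invSet σ := by
    simp [mem_invSet_swap hxy, mem_invSet, h.not_gt]
  have hmem' : (x, m) ∈ (invSet (swap x y) \ invSet σ).erase (x, y) := by
    simp [mem_invSet_swap hxy, mem_invSet, hσm.not_gt, hm, hm', hm'.ne]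
  have hcard : #(invSet σ ∩ invSet (swap x y)) ≤
      #(((invSet (swap x y) \ invSet σ).erase (x, y)).erase (x, m)) :=
    card_le_card_of_injOn _
      (fun p hp => have hq := mapsTo_sortPair_swap_inter hxy h hp
        mem_erase.2 ⟨hq.2.2 m hσm hσm', mem_erase.2 ⟨hq.2.1, hq.1⟩⟩)
      (injOn_invSet_swap.mono fun p hp => (mem_inter.1 hp).2)
  have := invCount_mul_swap_add_card_inter σ x y
  rw [card_erase_of_mem hmem', card_erase_of_mem hmem] at hcard
  have := card_pos.2 ⟨_, hmem'⟩
  rw [card_erase_of_mem hmem] at this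
  omega

theorem invCount_mul_swap_le (hxy : x < y)
    (hmid : ∀ m, x < m → m < y → σ x < σ m → σ y < σ m) :
    invCount n (σ * swap x y) ≤ invCount n σ + 1 := by
  have hcard := card_le_card_of_injOn _ (mapsTo_sortPair_swap_sdiff hxy hmid)
    (injOn_invSet_swap.mono fun p hp => (mem_sdiff.1 (mem_erase.1 hp).2).1)
  have := invCount_mul_swap_add_card_inter σ x y
  have := pred_card_le_card_erase (s := invSet (swap x y) \ invSet σ) (a := (x, y))
  omega

theorem invCount_mul_swap_eq_succ_iff (hxy : x < y) :
    invCount n (σ * swap x y) = invCount n σ + 1 ↔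
      σ x < σ y ∧ ∀ m, x < m → m < y → σ x < σ m → σ y < σ m := by
  refine ⟨fun hcov => ?_, fun ⟨h, hmid⟩ =>
    le_antisymm (invCount_mul_swap_le hxy hmid) (invCount_lt_invCount_mul_swap hxy h)⟩
  have h : σ x < σ y := by
    refine (σ.injective.ne hxy.ne).lt_of_le (le_of_not_gt fun h => ?_)
    have := invCount_lt_invCount_mul_swap (σ := σ * swap x y) hxy (by simpa using h)
    rw [mul_swap_mul_self] at this
    omega
  refine ⟨h, fun m hm hm' hσm =>
    (σ.injective.ne hm'.ne).symm.lt_of_le (le_of_not_gt fun hσm' => ?_)⟩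
  have := invCount_add_two_le_invCount_mul_swap hxy h hm hm' hσm hσm'
  omega

end Swap

theorem Equiv.Perm.eq_of_forall_le {σ μ : Perm (Fin n)} (h : ∀ i, μ i ≤ σ i) : σ = μ := by
  have hsum : ∑ i, (μ i : ℕ) = ∑ i, (σ i : ℕ) := by
    rw [Equiv.sum_comp μ (fun i => (i : ℕ)), Equiv.sum_comp σ (fun i => (i : ℕ))]
  have := (sum_eq_sum_iff_of_le fun i _ => Fin.le_def.1 (h i)).1 hsum
  ext i
  exact (this i (mem_univ i)).symm

structure KBruhatCriterion (k : ℕ) (σ μ : Perm (Fin n)) : Prop where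
  left_le : ∀ a : Fin n, (a : ℕ) < k → σ a ≤ μ a
  right_ge : ∀ b : Fin n, k ≤ (b : ℕ) → μ b ≤ σ b
  straddle : ∀ a b : Fin n, a < b → σ a < σ b → μ b < μ a → (a : ℕ) < k ∧ k ≤ (b : ℕ)

structure IsGreedyPair (k : ℕ) (σ μ : Perm (Fin n)) (a b : Fin n) : Prop where
  left_lt : (a : ℕ) < k
  left_lt_target : σ a < μ a
  left_max : ∀ a' : Fin n, (a' : ℕ) < k → σ a' < μ a' → σ a' ≤ σ a
  right_ge : k ≤ (b : ℕ)
  left_lt_right : σ a < σ b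
  right_le_target : σ b ≤ μ a
  target_lt_right : μ b < σ b
  right_min : ∀ b' : Fin n, k ≤ (b' : ℕ) → σ a < σ b' → σ b' ≤ μ a → μ b' < σ b' → σ b ≤ σ b'

def leftDeficit (k : ℕ) (σ μ : Perm (Fin n)) : ℕ :=
  ∑ a ∈ univ.filter (fun a : Fin n => (a : ℕ) < k), ((μ a : ℕ) - σ a)

namespace KBruhatCriterion
variable {k : ℕ} {σ ρ μ : Perm (Fin n)} {x y : Fin n}

theorem refl (k : ℕ) (σ : Perm (Fin n)) : KBruhatCriterion k σ σ :=
  ⟨fun _ _ => le_rfl, fun _ _ => le_rfl, fun _ _ _ h h' => absurd h h'.asymm⟩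

theorem mul_swap (hC : KBruhatCriterion k σ ρ) (hx : (x : ℕ) < k) (hy : k ≤ (y : ℕ))
    (hcov : invCount n (ρ * swap x y) = invCount n ρ + 1) :
    KBruhatCriterion k σ (ρ * swap x y) := by
  have hxy : x < y := Fin.lt_def.2 (by omega)
  obtain ⟨hρ, hmid⟩ := (invCount_mul_swap_eq_succ_iff hxy).1 hcov
  obtain ⟨hle, hge, hstr⟩ := hC
  have := hle x hx
  have := hge y hy
  have := ρ.injective
  -- a new pair violating (ii) either violates it for `ρ` or has a value of `ρ` strictly
  -- between `ρ x` and `ρ y`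
  refine ⟨fun a ha => ?_, fun b hb => ?_, fun a b hab hσ hμ => ?_⟩ <;>
    simp only [Perm.mul_apply, swap_apply_def] at * <;> split_ifs at * <;> grind

theorem of_kBruhatLE (h : kBruhatLE n k σ μ) : KBruhatCriterion k σ μ := by
  induction h with
  | refl => exact refl k σ
  | tail _ hcov ih =>
    obtain ⟨x, y, hx, hy, rfl, hcov⟩ := hcov
    exact ih.mul_swap hx hy hcov

theorem exists_isGreedyPair (hC : KBruhatCriterion k σ μ) (hne : σ ≠ μ) :
    ∃ a b, IsGreedyPair k σ μ a b := by
  classical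
  obtain ⟨a, ha, haμ⟩ : ∃ a : Fin n, (a : ℕ) < k ∧ σ a < μ a := by
    by_contra! h
    exact hne (Perm.eq_of_forall_le fun i =>
      if hi : (i : ℕ) < k then h i hi else hC.right_ge i (not_lt.1 hi))
  obtain ⟨a, ha, hamax⟩ := (univ.filter fun a : Fin n => (a : ℕ) < k ∧ σ a < μ a).exists_max_image
    σ ⟨a, by simp [ha, haμ]⟩
  simp only [mem_filter, mem_univ, true_and] at ha hamax
  obtain ⟨c, hc⟩ := σ.surjective (μ a)
  have hc_right : k ≤ (c : ℕ) ∧ σ a < σ c ∧ σ c ≤ μ a ∧ μ c < σ c := by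
    have := hC.left_le c
    have := hC.right_ge c
    have := μ.injective.ne (a₁ := c) (a₂ := a)
    have := hamax c
    grind
  obtain ⟨b, hb, hbmin⟩ := (univ.filter fun b : Fin n =>
    k ≤ (b : ℕ) ∧ σ a < σ b ∧ σ b ≤ μ a ∧ μ b < σ b).exists_min_image σ
      ⟨c, by simpa using hc_right⟩
  simp only [mem_filter, mem_univ, true_and] at hb hbmin
  exact ⟨a, b, ha.1, ha.2, fun a' h h' => hamax a' ⟨h, h'⟩, hb.1, hb.2.1, hb.2.2.1, hb.2.2.2,
    fun b' h₁ h₂ h₃ h₄ => hbmin b' ⟨h₁, h₂, h₃, h₄⟩⟩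

end KBruhatCriterion

namespace IsGreedyPair
variable {k : ℕ} {σ μ : Perm (Fin n)} {a b : Fin n}

theorem lt (hG : IsGreedyPair k σ μ a b) : a < b :=
  Fin.lt_def.2 (lt_of_lt_of_le hG.left_lt hG.right_ge)

theorem target_le (hC : KBruhatCriterion k σ μ) (hG : IsGreedyPair k σ μ a b) : μ b ≤ σ a := by
  -- otherwise the position `g` with `σ g = μ b` contradicts the maximality of `σ a` (if `g < k`)
  -- or the minimality of `σ b` (if `g ≥ k`)
  obtain ⟨g, hg⟩ := σ.surjective (μ b)
  obtain ⟨hle, hge, -⟩ := hC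
  obtain ⟨-, -, hamax, hb, hab, hbμ, hμb, hbmin⟩ := hG
  have := μ.injective
  grind

theorem isCover (hC : KBruhatCriterion k σ μ) (hG : IsGreedyPair k σ μ a b) :
    invCount n (σ * swap a b) = invCount n σ + 1 := by
  refine (invCount_mul_swap_eq_succ_iff hG.lt).2 ⟨hG.left_lt_right, fun m ham hmb hσm => ?_⟩
  -- a value `σ m` between `σ a` and `σ b` contradicts the maximality of `σ a` (if `m < k`) or the
  -- minimality of `σ b` (if `m ≥ k`), unless `σ m = μ m`, which (ii) excludes
  have := hG.target_le hC
  obtain ⟨hle, hge, hstr⟩ := hC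
  obtain ⟨ha, -, hamax, hb, -, hbμ, hμb, hbmin⟩ := hG
  have := σ.injective
  have := μ.injective
  grind

theorem criterion_mul_swap (hC : KBruhatCriterion k σ μ) (hG : IsGreedyPair k σ μ a b) :
    KBruhatCriterion k (σ * swap a b) μ := by
  have := hG.target_le hC
  obtain ⟨hle, hge, hstr⟩ := hC
  obtain ⟨ha, -, hamax, hb, hab, hbμ, hμb, hbmin⟩ := hG
  have := σ.injective
  refine ⟨fun c hc => ?_, fun d hd => ?_, fun c d hcd hσ hμ => ?_⟩ <;>
    simp only [Perm.mul_apply, swap_apply_def] at * <;> split_ifs at * <;> grind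

theorem leftDeficit_mul_swap_lt (hG : IsGreedyPair k σ μ a b) :
    leftDeficit k (σ * swap a b) μ < leftDeficit k σ μ := by
  have hb : ∀ c : Fin n, (c : ℕ) < k → c ≠ b := fun c hc h => by
    have := hG.right_ge; subst h; omega
  apply sum_lt_sum
  · intro c hc
    rw [mem_filter] at hc
    rcases eq_or_ne c a with rfl | hca
    · simp only [Perm.mul_apply, swap_apply_left]
      exact Nat.sub_le_sub_left hG.left_lt_right.le _
    · simp only [Perm.mul_apply, swap_apply_of_ne_of_ne hca (hb c hc.2), le_refl]
  · refine ⟨a, by simp [hG.left_lt], ?_⟩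
    have := hG.left_lt_right
    have := hG.right_le_target
    simp only [Perm.mul_apply, swap_apply_left]
    rw [Fin.lt_def, Fin.le_def] at *
    omega

end IsGreedyPair

theorem kBruhatLE_of_kBruhatCriterion {k : ℕ} {σ μ : Perm (Fin n)}
    (hC : KBruhatCriterion k σ μ) : kBruhatLE n k σ μ := by
  induction hN : leftDeficit k σ μ using Nat.strong_induction_on generalizing σ with
  | _ N ih =>
    rcases eq_or_ne σ μ with rfl | hne
    · exact .refl
    obtain ⟨a, b, hG⟩ := hC.exists_isGreedyPair hne
    exact .head ⟨a, b, hG.left_lt, hG.right_ge, rfl, hG.isCover hC⟩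
      (ih _ (hN ▸ hG.leftDeficit_mul_swap_lt) (hG.criterion_mul_swap hC) rfl)

theorem kBruhatLE_iff_kBruhatCriterion {k : ℕ} {σ μ : Perm (Fin n)} :
    kBruhatLE n k σ μ ↔ KBruhatCriterion k σ μ :=
  ⟨KBruhatCriterion.of_kBruhatLE, kBruhatLE_of_kBruhatCriterion⟩

theorem kBruhat_characterization_general (n k : ℕ) (σ μ : Equiv.Perm (Fin n)) :
    (kBruhatLE n k σ μ →
      ((∀ a : Fin n, (a : ℕ) < k → σ a ≤ μ a) ∧
       (∀ b : Fin n, k ≤ (b : ℕ) → μ b ≤ σ b))) ∧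
    (kBruhatLE n k σ μ ↔
      (((∀ a : Fin n, (a : ℕ) < k → σ a ≤ μ a) ∧
        (∀ b : Fin n, k ≤ (b : ℕ) → μ b ≤ σ b)) ∧
       (∀ a b : Fin n, a < b → σ a < σ b → μ b < μ a →
          ((a : ℕ) < k ∧ k ≤ (b : ℕ))))) := by
  refine ⟨fun h => ?_, kBruhatLE_iff_kBruhatCriterion.trans ?_⟩
  · have hC := KBruhatCriterion.of_kBruhatLE h
    exact ⟨hC.left_le, hC.right_ge⟩
  · exact ⟨fun ⟨hle, hge, hstr⟩ => ⟨⟨hle, hge⟩, hstr⟩, fun ⟨⟨hle, hge⟩, hstr⟩ => ⟨hle, hge, hstr⟩⟩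

/-- Bergeron–Sottile. If `σ ≤_k μ` then (i) `σ(a) ≤ μ(a)` for every
position `a` among the first `k` and `σ(b) ≥ μ(b)` for every later position `b`;
conversely `σ ≤_k μ` iff (i) holds together with (ii): whenever `a < b`,
`σ(a) < σ(b)` and `μ(a) > μ(b)`, the pair `(a,b)` straddles `k`. -/
theorem kBruhat_characterization (n k : ℕ) (hk1 : 1 ≤ k) (hk : k < n)
    (σ μ : Equiv.Perm (Fin n)) :
    (kBruhatLE n k σ μ →
      ((∀ a : Fin n, (a : ℕ) < k → σ a ≤ μ a) ∧
       (∀ b : Fin n, k ≤ (b : ℕ) → μ b ≤ σ b))) ∧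
    (kBruhatLE n k σ μ ↔
      (((∀ a : Fin n, (a : ℕ) < k → σ a ≤ μ a) ∧
        (∀ b : Fin n, k ≤ (b : ℕ) → μ b ≤ σ b)) ∧
       (∀ a b : Fin n, a < b → σ a < σ b → μ b < μ a →
          ((a : ℕ) < k ∧ k ≤ (b : ℕ))))) :=
  kBruhat_characterization_general n k σ μ
end

section
/- In the Hopf algebra FQSym whose fundamental basis (F_σ) is indexed by permutations, the product F_σ · F_μ equals the sum of F_ν over all ν in the shifted shuffle of σ and μ (shuffles of σ with the word obtained by adding |σ| to every letter of μ), and this set of permutations ν is an interval of the right weak order, namely [σ·μ⃗, μ⃗·σ] where μ⃗ denotes μ shifted by |σ|. -/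
/-- The standardization of a word `u` over the ordered alphabet `ℕ`: position `i`
receives rank `1 + #{j : u_j < u_i or (u_j = u_i and j < i)}`. -/
def stdWord (u : List ℕ) : List ℕ :=
  (List.range u.length).map fun i =>
    1 + ((List.range u.length).filter fun j =>
      u.getD j 0 < u.getD i 0 ∨ (u.getD j 0 = u.getD i 0 ∧ j < i)).length

/-- The word of values (1-based) of a permutation of `{1,…,n}`. -/
def wordOf {n : ℕ} (σ : Equiv.Perm (Fin n)) : List ℕ :=
  List.ofFn fun i => (σ i : ℕ) + 1

/-- The fundamental basis element `F_σ` of FQSym, realized as the formal sum of all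
words `u` whose standardization has inverse `σ` (i.e. `std u = σ⁻¹`), encoded as the
coefficient function `u ↦ [std u = word of σ⁻¹]`. -/
def Ffun {n : ℕ} (σ : Equiv.Perm (Fin n)) (u : List ℕ) : ℤ :=
  if stdWord u = wordOf σ⁻¹ then 1 else 0

/-- Convolution product of noncommutative series given by coefficient functions. -/
def conv (f g : List ℕ → ℤ) (w : List ℕ) : ℤ :=
  ∑ k ∈ Finset.range (w.length + 1), f (w.take k) * g (w.drop k)

/-- `ν` belongs to the shifted shuffle of `σ` and `μ`: the subword of letters `≤ p`
of `ν` is the word of `σ` and the subword of letters `> p` is the word of `μ`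
shifted by `p`. -/
def InShiftedShuffle (p q : ℕ) (σ : Equiv.Perm (Fin p)) (μ : Equiv.Perm (Fin q))
    (ν : Equiv.Perm (Fin (p + q))) : Prop :=
  (wordOf ν).filter (fun a => a ≤ p) = wordOf σ ∧
  (wordOf ν).filter (fun a => p < a) = (wordOf μ).map (· + p)

/-- Coinversions of a permutation (pairs of values `(x,y)` with `x < y` appearing in
the order `y … x`); the right weak order is containment of coinversion sets. -/
def coinvSet {n : ℕ} (σ : Equiv.Perm (Fin n)) : Set (Fin n × Fin n) :=
  {x | x.1 < x.2 ∧ σ⁻¹ x.2 < σ⁻¹ x.1}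

/-- The permutation whose word is `σ·μ⃗` (the word of `σ` followed by the word of `μ`
shifted by `p`). -/
def concatPerm (p q : ℕ) (σ : Equiv.Perm (Fin p)) (μ : Equiv.Perm (Fin q)) :
    Equiv.Perm (Fin (p + q)) :=
  finSumFinEquiv.symm.trans ((Equiv.sumCongr σ μ).trans finSumFinEquiv)

/-- The permutation whose word is `μ⃗·σ` (the word of `μ` shifted by `p` followed by
the word of `σ`). -/
def concatPerm' (p q : ℕ) (σ : Equiv.Perm (Fin p)) (μ : Equiv.Perm (Fin q)) :
    Equiv.Perm (Fin (p + q)) :=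
  (((finSumFinEquiv : Fin q ⊕ Fin p ≃ Fin (q + p)).trans
      (finCongr (Nat.add_comm q p))).symm).trans
    ((Equiv.sumCongr μ σ).trans
      ((Equiv.sumComm (Fin q) (Fin p)).trans
        (finSumFinEquiv : Fin p ⊕ Fin q ≃ Fin (p + q))))

/-!
A word `w` of length `p + q` has a unique standardization `ν⁻¹`, and `w` occurs in `F_σ · F_μ`
iff its prefix of length `p` standardizes to `σ⁻¹` and its suffix to `μ⁻¹`. Ordering the positions
of `w` by the key (letter, position), the prefix condition says that the positions in `ν` of the
values `σ 0, σ 1, …` increase, i.e. that `ν` read on the values `≤ p` is `σ`; likewise for the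
suffix and `μ`. So `w` occurs iff `ν` lies in the shifted shuffle.

That shuffle condition says that the coinversions of `ν` between two small or two large values
are those of `σ` or of `μ`, while those between a small and a large value are free; `σ·μ⃗` and
`μ⃗·σ` have none, respectively all, of the latter.
-/

open Finset

def posKey (u : List ℕ) (i : ℕ) : ℕ ×ₗ ℕ := toLex (u.getD i 0, i)

lemma posKey_injective (u : List ℕ) : Function.Injective (posKey u) :=
  fun _ _ h => by simpa [posKey] using congrArg (fun x => (ofLex x).2) h

lemma length_filter_range_eq_card (n : ℕ) (P : ℕ → Prop) [DecidablePred P] :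
    ((List.range n).filter fun j => decide (P j)).length = #{j : Fin n | P j} := by
  change #{j ∈ range n | P j} = _
  rw [card_filter, card_filter, Fin.sum_univ_eq_sum_range (fun j => if P j then 1 else 0)]

lemma card_lt_eq_of_strictMono {α : Type*} [LinearOrder α] {n : ℕ} {f : Fin n → α}
    {τ : Equiv.Perm (Fin n)} (hf : StrictMono (f ∘ ⇑τ⁻¹)) (i : Fin n) :
    #{j | f j < f i} = τ i := by
  rw [← Fin.card_Iio]
  refine card_equiv τ fun j => ?_
  simpa using hf.lt_iff_lt (a := τ j) (b := τ i)

lemma stdWord_eq (u : List ℕ) :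
    stdWord u = (List.range u.length).map
      fun i => 1 + #{j : Fin u.length | posKey u j < posKey u i} := by
  refine List.map_congr_left fun i _ => ?_
  rw [← length_filter_range_eq_card u.length (fun j => posKey u j < posKey u i)]
  simp only [posKey, Prod.Lex.toLex_lt_toLex]

lemma stdWord_eq_wordOf_of_strictMono {u : List ℕ} {n : ℕ} {τ : Equiv.Perm (Fin n)}
    (hu : u.length = n) (hτ : StrictMono fun k => posKey u (τ⁻¹ k)) :
    stdWord u = wordOf τ := by
  subst hu
  refine List.ext_getElem (by simp [stdWord, wordOf]) fun k hk _ => ?_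
  have hk : k < u.length := by simpa [stdWord] using hk
  simp only [stdWord_eq, wordOf, List.getElem_map, List.getElem_range, List.getElem_ofFn]
  rw [card_lt_eq_of_strictMono (f := fun j : Fin u.length => posKey u j) hτ ⟨k, hk⟩, add_comm]

lemma exists_strictMono_posKey (u : List ℕ) :
    ∃ τ : Equiv.Perm (Fin u.length), StrictMono fun k => posKey u (τ⁻¹ k) :=
  ⟨(Tuple.sort fun j => posKey u j)⁻¹, fun a b hab => by
      simpa using (Tuple.monotone_sort (fun j : Fin u.length => posKey u j)).strictMono_of_injective
        ((posKey_injective u).comp (Fin.val_injective.comp (Tuple.sort _).injective)) hab⟩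

lemma exists_stdWord_eq_wordOf {u : List ℕ} {n : ℕ} (hu : u.length = n) :
    ∃ τ : Equiv.Perm (Fin n), stdWord u = wordOf τ := by
  subst hu
  obtain ⟨τ, hτ⟩ := exists_strictMono_posKey u
  exact ⟨τ, stdWord_eq_wordOf_of_strictMono rfl hτ⟩

lemma wordOf_injective {n : ℕ} : Function.Injective (wordOf (n := n)) := by
  intro τ τ' h
  ext i
  simpa [wordOf] using congrArg (·[i]?) h

lemma length_stdWord (u : List ℕ) : (stdWord u).length = u.length := by
  simp [stdWord]

lemma length_wordOf {n : ℕ} (τ : Equiv.Perm (Fin n)) : (wordOf τ).length = n := by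
  simp [wordOf]

lemma stdWord_eq_wordOf_iff {u : List ℕ} {n : ℕ} (τ : Equiv.Perm (Fin n)) :
    stdWord u = wordOf τ ↔ u.length = n ∧ StrictMono fun k => posKey u (τ⁻¹ k) := by
  refine ⟨fun h => ?_, fun h => stdWord_eq_wordOf_of_strictMono h.1 h.2⟩
  have hu : u.length = n := by simpa [length_stdWord, length_wordOf] using congrArg List.length h
  subst hu
  obtain ⟨τ', hτ'⟩ := exists_strictMono_posKey u
  obtain rfl := wordOf_injective (h.symm.trans (stdWord_eq_wordOf_of_strictMono rfl hτ'))
  exact ⟨rfl, hτ'⟩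

lemma filter_finRange_eq_ofFn_iff {n r : ℕ} (s : Fin n → Bool) (g : Fin r → Fin n)
    (hs : ∀ x, s x ↔ x ∈ Set.range g) :
    (List.finRange n).filter s = List.ofFn g ↔ StrictMono g := by
  have hsorted := ((List.sortedLT_finRange n).pairwise.filter s).sortedLT
  refine ⟨fun h => List.sortedLT_ofFn_iff.1 (h ▸ hsorted), fun hg => ?_⟩
  refine hsorted.eq_of_mem_iff (List.sortedLT_ofFn_iff.2 hg) fun x => ?_
  simp [hs]

lemma filter_wordOf_eq_iff {n r : ℕ} (ν : Equiv.Perm (Fin n)) (Q : ℕ → Bool)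
    (g : Fin r → Fin n) (hQ : ∀ x : Fin n, Q (x + 1) ↔ x ∈ Set.range g) :
    (wordOf ν).filter Q = List.ofFn (fun t => (g t : ℕ) + 1) ↔ StrictMono (⇑ν⁻¹ ∘ g) := by
  have hinj : Function.Injective fun k : Fin n => (ν k : ℕ) + 1 :=
    fun _ _ h => ν.injective (Fin.ext (by simpa using h))
  have hword : wordOf ν = (List.finRange n).map fun k => (ν k : ℕ) + 1 := List.ofFn_eq_map
  have hg : List.ofFn (fun t => (g t : ℕ) + 1) =
      (List.ofFn (⇑ν⁻¹ ∘ g)).map fun k => (ν k : ℕ) + 1 := by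
    simp [List.map_ofFn, Function.comp_def]
  rw [hword, hg, List.filter_map, (List.map_injective_iff.2 hinj).eq_iff]
  refine filter_finRange_eq_ofFn_iff _ _ fun k => ?_
  simp [hQ, Set.range_comp]

lemma inShiftedShuffle_iff {p q : ℕ} (σ : Equiv.Perm (Fin p)) (μ : Equiv.Perm (Fin q))
    (ν : Equiv.Perm (Fin (p + q))) :
    InShiftedShuffle p q σ μ ν ↔
      StrictMono (⇑ν⁻¹ ∘ Fin.castAdd q ∘ σ) ∧ StrictMono (⇑ν⁻¹ ∘ Fin.natAdd p ∘ μ) := by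
  have hσ : wordOf σ = List.ofFn fun t => (Fin.castAdd q (σ t) : ℕ) + 1 := rfl
  have hμ : (wordOf μ).map (· + p) = List.ofFn fun t => (Fin.natAdd p (μ t) : ℕ) + 1 := by
    simp only [wordOf, List.map_ofFn, Function.comp_def, Fin.val_natAdd]
    grind
  have hlow (x : Fin (p + q)) :
      decide ((x : ℕ) + 1 ≤ p) ↔ x ∈ Set.range (Fin.castAdd q ∘ σ) := by
    rw [EquivLike.range_comp, decide_eq_true_iff]
    exact ⟨fun h => ⟨⟨x, by omega⟩, rfl⟩, by rintro ⟨i, rfl⟩; simp⟩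
  have hhigh (x : Fin (p + q)) :
      decide (p < (x : ℕ) + 1) ↔ x ∈ Set.range (Fin.natAdd p ∘ μ) := by
    rw [EquivLike.range_comp, Fin.range_natAdd, decide_eq_true_iff]
    simp
  rw [InShiftedShuffle, hσ, hμ, filter_wordOf_eq_iff _ _ _ hlow, filter_wordOf_eq_iff _ _ _ hhigh]
  rfl

lemma Ffun_eq_zero_of_length_ne {n : ℕ} (σ : Equiv.Perm (Fin n)) {u : List ℕ}
    (hu : u.length ≠ n) : Ffun σ u = 0 :=
  if_neg fun h => hu (by simpa [length_stdWord, length_wordOf] using congrArg List.length h)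

lemma conv_Ffun {p q : ℕ} (σ : Equiv.Perm (Fin p)) (μ : Equiv.Perm (Fin q)) (w : List ℕ) :
    conv (Ffun σ) (Ffun μ) w = Ffun σ (w.take p) * Ffun μ (w.drop p) := by
  refine sum_eq_single p (fun k hk hkp => ?_) fun hp => ?_
  · rw [Ffun_eq_zero_of_length_ne σ (by simp at hk ⊢; omega), zero_mul]
  · rw [Ffun_eq_zero_of_length_ne σ (by simp at hp ⊢; omega), zero_mul]

lemma strictMono_posKey_comp_iff {w : List ℕ} {n r : ℕ} {ν : Equiv.Perm (Fin n)}
    (hν : StrictMono fun k => posKey w (ν k)) (g : Fin r → Fin n) :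
    (StrictMono fun k => posKey w (g k)) ↔ StrictMono (⇑ν⁻¹ ∘ g) := by
  simp only [StrictMono, Function.comp_apply, ← hν.lt_iff_lt, Equiv.Perm.coe_inv,
    Equiv.apply_symm_apply]

lemma posKey_take {w : List ℕ} {p i : ℕ} (hi : i < p) : posKey (w.take p) i = posKey w i := by
  simp [posKey, List.getD_eq_getElem?_getD, hi]

lemma posKey_drop_lt_posKey_drop {w : List ℕ} {p i j : ℕ} :
    posKey (w.drop p) i < posKey (w.drop p) j ↔ posKey w (p + i) < posKey w (p + j) := by
  simp [posKey, Prod.Lex.toLex_lt_toLex, List.getD_eq_getElem?_getD, List.getElem?_drop]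

section stdWord_take_drop

variable {p q : ℕ} {w : List ℕ} {ν : Equiv.Perm (Fin (p + q))}

lemma stdWord_take_eq_iff (hw : stdWord w = wordOf ν⁻¹) (σ : Equiv.Perm (Fin p)) :
    stdWord (w.take p) = wordOf σ⁻¹ ↔ StrictMono (⇑ν⁻¹ ∘ Fin.castAdd q ∘ σ) := by
  obtain ⟨hlen, hν⟩ := (stdWord_eq_wordOf_iff _).1 hw
  rw [inv_inv] at hν
  rw [stdWord_eq_wordOf_iff, inv_inv, ← strictMono_posKey_comp_iff hν]
  simp [hlen, posKey_take]

lemma stdWord_drop_eq_iff (hw : stdWord w = wordOf ν⁻¹) (μ : Equiv.Perm (Fin q)) :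
    stdWord (w.drop p) = wordOf μ⁻¹ ↔ StrictMono (⇑ν⁻¹ ∘ Fin.natAdd p ∘ μ) := by
  obtain ⟨hlen, hν⟩ := (stdWord_eq_wordOf_iff _).1 hw
  rw [inv_inv] at hν
  rw [stdWord_eq_wordOf_iff, inv_inv, ← strictMono_posKey_comp_iff hν]
  simp [hlen, StrictMono, posKey_drop_lt_posKey_drop]

end stdWord_take_drop

open scoped Classical in
lemma conv_Ffun_eq_sum_inShiftedShuffle {p q : ℕ} (σ : Equiv.Perm (Fin p))
    (μ : Equiv.Perm (Fin q)) (w : List ℕ) :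
    conv (Ffun σ) (Ffun μ) w =
      ∑ ν ∈ univ.filter (fun ν : Equiv.Perm (Fin (p + q)) => InShiftedShuffle p q σ μ ν),
        Ffun ν w := by
  rw [conv_Ffun]
  by_cases hw : w.length = p + q
  · obtain ⟨τ, hτ⟩ := exists_stdWord_eq_wordOf hw
    obtain ⟨ν₀, hν₀⟩ : ∃ ν₀ : Equiv.Perm (Fin (p + q)), stdWord w = wordOf ν₀⁻¹ :=
      ⟨τ⁻¹, by rwa [inv_inv]⟩
    have hF (ν : Equiv.Perm (Fin (p + q))) : Ffun ν w = if ν = ν₀ then 1 else 0 := by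
      simp only [Ffun, hν₀, wordOf_injective.eq_iff, inv_inj, eq_comm]
    simp only [hF, sum_ite_eq', mem_filter, mem_univ, true_and, inShiftedShuffle_iff]
    simp only [Ffun, stdWord_take_eq_iff hν₀, stdWord_drop_eq_iff hν₀, ite_zero_mul_ite_zero,
      mul_one]
  · rw [sum_eq_zero fun ν _ => Ffun_eq_zero_of_length_ne ν hw]
    by_cases hp : p ≤ w.length
    · rw [Ffun_eq_zero_of_length_ne μ (by simp; omega), mul_zero]
    · rw [Ffun_eq_zero_of_length_ne σ (by simp; omega), zero_mul]

lemma mem_coinvSet {n : ℕ} {ν : Equiv.Perm (Fin n)} {x y : Fin n} :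
    (x, y) ∈ coinvSet ν ↔ x < y ∧ ν⁻¹ y < ν⁻¹ x := Iff.rfl

lemma strictMono_comp_iff_forall_lt {r n : ℕ} {e : Fin r → Fin n} (he : Function.Injective e)
    (ρ : Equiv.Perm (Fin r)) (ν : Equiv.Perm (Fin n)) :
    StrictMono (⇑ν⁻¹ ∘ e ∘ ρ) ↔ ∀ i j, i < j → (ν⁻¹ (e j) < ν⁻¹ (e i) ↔ ρ⁻¹ j < ρ⁻¹ i) := by
  refine ⟨fun h i j _ => by simpa using h.lt_iff_lt (a := ρ⁻¹ j) (b := ρ⁻¹ i), fun h a b hab => ?_⟩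
  rcases lt_trichotomy (ρ a) (ρ b) with hlt | heq | hgt
  · have hne : ν⁻¹ (e (ρ a)) ≠ ν⁻¹ (e (ρ b)) := (ν⁻¹.injective.comp he).ne hlt.ne
    refine lt_of_le_of_ne (not_lt.1 fun hba => ?_) hne
    exact lt_asymm hab (by simpa using (h _ _ hlt).1 hba)
  · exact absurd (ρ.injective heq) hab.ne
  · simpa using (h _ _ hgt).2 (by simpa using hab)

namespace Fin

variable {m n : ℕ}

@[simp]
lemma castAdd_lt_castAdd_iff {i j : Fin m} : castAdd n i < castAdd n j ↔ i < j := Iff.rfl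

@[simp]
lemma castAdd_lt_natAdd (i : Fin m) (j : Fin n) : castAdd n i < natAdd m j := by
  rw [lt_def, val_castAdd, val_natAdd]
  omega

@[simp]
lemma not_natAdd_lt_castAdd (i : Fin m) (j : Fin n) : ¬natAdd m j < castAdd n i :=
  (castAdd_lt_natAdd i j).not_gt

end Fin

section concatPerm

variable {p q : ℕ} (σ : Equiv.Perm (Fin p)) (μ : Equiv.Perm (Fin q))

@[simp]
lemma concatPerm_inv_castAdd (i : Fin p) :
    (concatPerm p q σ μ)⁻¹ (Fin.castAdd q i) = Fin.castAdd q (σ⁻¹ i) := by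
  simp [concatPerm, Equiv.Perm.inv_def]

@[simp]
lemma concatPerm_inv_natAdd (j : Fin q) :
    (concatPerm p q σ μ)⁻¹ (Fin.natAdd p j) = Fin.natAdd p (μ⁻¹ j) := by
  simp [concatPerm, Equiv.Perm.inv_def]

@[simp]
lemma concatPerm'_inv_castAdd (i : Fin p) :
    (concatPerm' p q σ μ)⁻¹ (Fin.castAdd q i) =
      Fin.cast (add_comm q p) (Fin.natAdd q (σ⁻¹ i)) := by
  simp [concatPerm', Equiv.Perm.inv_def]

@[simp]
lemma concatPerm'_inv_natAdd (j : Fin q) :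
    (concatPerm' p q σ μ)⁻¹ (Fin.natAdd p j) =
      Fin.cast (add_comm q p) (Fin.castAdd p (μ⁻¹ j)) := by
  simp [concatPerm', Equiv.Perm.inv_def]

lemma coinvSet_subset_coinvSet_subset_iff (ν : Equiv.Perm (Fin (p + q))) :
    (coinvSet (concatPerm p q σ μ) ⊆ coinvSet ν ∧ coinvSet ν ⊆ coinvSet (concatPerm' p q σ μ)) ↔
      (∀ i j : Fin p, i < j → (ν⁻¹ (Fin.castAdd q j) < ν⁻¹ (Fin.castAdd q i) ↔ σ⁻¹ j < σ⁻¹ i)) ∧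
      (∀ i j : Fin q, i < j → (ν⁻¹ (Fin.natAdd p j) < ν⁻¹ (Fin.natAdd p i) ↔ μ⁻¹ j < μ⁻¹ i)) := by
  simp only [Set.subset_def, Prod.forall, Fin.forall_fin_add, mem_coinvSet,
    Fin.castAdd_lt_castAdd_iff, Fin.natAdd_lt_natAdd_iff, Fin.castAdd_lt_natAdd,
    Fin.not_natAdd_lt_castAdd, concatPerm_inv_castAdd, concatPerm_inv_natAdd,
    concatPerm'_inv_castAdd, concatPerm'_inv_natAdd, Fin.cast_lt_cast, true_and, false_and,
    and_false, and_true, false_implies, implies_true, forall_const, and_imp]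
  grind

lemma inShiftedShuffle_iff_coinvSet (ν : Equiv.Perm (Fin (p + q))) :
    InShiftedShuffle p q σ μ ν ↔
      coinvSet (concatPerm p q σ μ) ⊆ coinvSet ν ∧ coinvSet ν ⊆ coinvSet (concatPerm' p q σ μ) := by
  rw [inShiftedShuffle_iff, coinvSet_subset_coinvSet_subset_iff,
    strictMono_comp_iff_forall_lt (Fin.castAdd_injective p q),
    strictMono_comp_iff_forall_lt (Fin.natAdd_injective q p)]

end concatPerm

open scoped Classical in
/-- In FQSym, `F_σ · F_μ = Σ_ν F_ν` summed over the shifted shuffle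
of `σ` and `μ`, and this set of permutations is the interval `[σ·μ⃗, μ⃗·σ]` of the
right weak order. -/
theorem fqsym_product_interval (p q : ℕ)
    (σ : Equiv.Perm (Fin p)) (μ : Equiv.Perm (Fin q)) :
    (∀ w : List ℕ,
      conv (Ffun σ) (Ffun μ) w =
        ∑ ν ∈ Finset.univ.filter
            (fun ν : Equiv.Perm (Fin (p + q)) => InShiftedShuffle p q σ μ ν),
          Ffun ν w) ∧
    (∀ ν : Equiv.Perm (Fin (p + q)),
      InShiftedShuffle p q σ μ ν ↔
        (coinvSet (concatPerm p q σ μ) ⊆ coinvSet ν ∧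
         coinvSet ν ⊆ coinvSet (concatPerm' p q σ μ))) :=
  ⟨conv_Ffun_eq_sum_inShiftedShuffle σ μ, inShiftedShuffle_iff_coinvSet σ μ⟩
end
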